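/- arXiv:0907.0644 — 3 statements merged into one kernel-verified Lean document; each statement's English description precedes it below -/
import Mathlib

section
/- Let n, m ≥ 1, let X ⊆ ℤ^n be a finite nonempty set, let c ∈ ℤ^n, and let μ_1, …, μ_m : ℤ^n → ℝ satisfy 0 ≤ μ_i(x) ≤ 1 for every x ∈ X and every i. Let S = {(x, z) ∈ X × ℝ : 0 ≤ z ≤ 1 and z ≤ μ_i(x) for all i = 1, …, m}. Then a pair (x*, z*) ∈ S is a nondominated solution of the biobjective maximization problem of ((x,z) ↦ c·x, (x,z) ↦ z) over S if and only if z* = min_{1≤i≤m} μ_i(x*) and x* is a nondominated solution of the biobjective maximization problem of (x ↦ c·x, x ↦ min_{1≤i≤m} μ_i(x)) over X. -/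
/-
Every feasible `(x, z)` satisfies `z ≤ min_i μ_i(x)`, and `(x, min_i μ_i(x))` is feasible, so
raising `z` to `min_i μ_i(x)` never hurts: a nondominated `(x, z)` must sit on the graph of the
minimum, and along that graph dominance of `(t, min_i μ_i(t))` over `(x, min_i μ_i(x))` in the
lifted problem is exactly dominance of `t` over `x` in the reduced one.
-/

/-- `s` is a nondominated solution of the multiobjective maximization problem of the
objective functions `f i` over the feasible set `S`: `s ∈ S` and there is no `t ∈ S`
with `f i s ≤ f i t` for all `i` and `f j s < f j t` for some `j`. -/
def Nondominated {σ ι : Type*} (S : Set σ) (f : ι → σ → ℝ) (s : σ) : Prop :=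
  s ∈ S ∧ ¬ ∃ t ∈ S, (∀ i, f i s ≤ f i t) ∧ (∃ j, f j s < f j t)

theorem nondominated_pair_iff {σ : Type*} {S : Set σ} {f g : σ → ℝ} {s : σ} :
    Nondominated S ![f, g] s ↔
      s ∈ S ∧ ¬ ∃ t ∈ S, f s ≤ f t ∧ g s ≤ g t ∧ (f s < f t ∨ g s < g t) := by
  simp [Nondominated, Fin.forall_fin_two, Fin.exists_fin_two, and_assoc]

theorem nondominated_hypograph_iff {σ : Type*} {X : Set σ} {S : Set (σ × ℝ)} {f g : σ → ℝ}
    (hS : ∀ q ∈ S, q.1 ∈ X ∧ q.2 ≤ g q.1) (hgraph : ∀ x ∈ X, (x, g x) ∈ S)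
    {p : σ × ℝ} (hp : p ∈ S) :
    Nondominated S ![fun q => f q.1, fun q => q.2] p ↔
      p.2 = g p.1 ∧ Nondominated X ![f, g] p.1 := by
  obtain ⟨hpX, hple⟩ := hS p hp
  simp only [nondominated_pair_iff]
  constructor
  · rintro ⟨-, hnd⟩
    have heq : p.2 = g p.1 := by
      by_contra hne
      exact hnd ⟨(p.1, g p.1), hgraph p.1 hpX, le_rfl, hple, Or.inr (lt_of_le_of_ne hple hne)⟩
    refine ⟨heq, hpX, ?_⟩
    rintro ⟨t, htX, hf, hg, hlt⟩
    exact hnd ⟨(t, g t), hgraph t htX, hf, heq ▸ hg, heq ▸ hlt⟩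
  · rintro ⟨heq, -, hnd⟩
    refine ⟨hp, ?_⟩
    rintro ⟨⟨t, w⟩, htS, hf, hw, hlt⟩
    obtain ⟨htX, hwt⟩ := hS _ htS
    refine hnd ⟨t, htX, hf, heq ▸ hw.trans hwt, ?_⟩
    exact hlt.imp id fun h => heq ▸ h.trans_le hwt

theorem stmt0_general (n m : ℕ) (hm : 1 ≤ m)
    (X : Set (Fin n → ℤ))
    (c : Fin n → ℤ) (μ : Fin m → (Fin n → ℤ) → ℝ)
    (hμ : ∀ x ∈ X, ∀ i, 0 ≤ μ i x ∧ μ i x ≤ 1)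
    (S : Set ((Fin n → ℤ) × ℝ))
    (hS : S = {p | p.1 ∈ X ∧ 0 ≤ p.2 ∧ p.2 ≤ 1 ∧ ∀ i, p.2 ≤ μ i p.1})
    (minμ : (Fin n → ℤ) → ℝ)
    (hminμ : ∀ x, minμ x =
      Finset.univ.inf' (Finset.univ_nonempty_iff.mpr (Fin.pos_iff_nonempty.mp hm))
        (fun i => μ i x))
    (p : (Fin n → ℤ) × ℝ) (hp : p ∈ S) :
    Nondominated S ![fun q => ∑ j, (c j : ℝ) * q.1 j, fun q => q.2] p ↔
      (p.2 = minμ p.1 ∧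
        Nondominated X ![fun x => ∑ j, (c j : ℝ) * x j, fun x => minμ x] p.1) := by
  have le_minμ_iff (x : Fin n → ℤ) (z : ℝ) : z ≤ minμ x ↔ ∀ i, z ≤ μ i x := by
    simp [hminμ, Finset.le_inf'_iff]
  obtain ⟨i₀⟩ := Fin.pos_iff_nonempty.mp hm
  refine nondominated_hypograph_iff (f := fun x => ∑ j, (c j : ℝ) * x j) (g := minμ)
    (fun q hq => ?_) (fun x hx => ?_) hp
  · rw [hS] at hq
    exact ⟨hq.1, (le_minμ_iff _ _).2 hq.2.2.2⟩
  · rw [hS]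
    refine ⟨hx, (le_minμ_iff _ _).2 fun i => (hμ x hx i).1, ?_, (le_minμ_iff _ _).1 le_rfl⟩
    exact ((le_minμ_iff _ _).1 le_rfl i₀).trans (hμ x hx i₀).2

theorem stmt0 (n m : ℕ) (hn : 1 ≤ n) (hm : 1 ≤ m)
    (X : Set (Fin n → ℤ)) (hXfin : X.Finite) (hXne : X.Nonempty)
    (c : Fin n → ℤ) (μ : Fin m → (Fin n → ℤ) → ℝ)
    (hμ : ∀ x ∈ X, ∀ i, 0 ≤ μ i x ∧ μ i x ≤ 1)
    (S : Set ((Fin n → ℤ) × ℝ))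
    (hS : S = {p | p.1 ∈ X ∧ 0 ≤ p.2 ∧ p.2 ≤ 1 ∧ ∀ i, p.2 ≤ μ i p.1})
    (minμ : (Fin n → ℤ) → ℝ)
    (hminμ : ∀ x, minμ x =
      Finset.univ.inf' (Finset.univ_nonempty_iff.mpr (Fin.pos_iff_nonempty.mp hm))
        (fun i => μ i x))
    (p : (Fin n → ℤ) × ℝ) (hp : p ∈ S) :
    Nondominated S ![fun q => ∑ j, (c j : ℝ) * q.1 j, fun q => q.2] p ↔
      (p.2 = minμ p.1 ∧
        Nondominated X ![fun x => ∑ j, (c j : ℝ) * x j, fun x => minμ x] p.1) :=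
  stmt0_general n m hm X c μ hμ S hS minμ hminμ p hp
end

section
/- Let n, m ≥ 1, let X ⊆ ℤ^n be a finite nonempty set, let c ∈ ℤ^n, let a_1, …, a_m ∈ ℤ^n, b_1, …, b_m ∈ ℤ, d_1, …, d_m ∈ ℤ with d_i > 0, and define μ_i(x) = (b_i − a_i·x)/d_i; assume 0 ≤ μ_i(x) ≤ 1 for all x ∈ X and all i. Let M be a positive integer divisible by every d_i. Let S = {(x, z) ∈ X × ℝ : 0 ≤ z ≤ 1 and z ≤ μ_i(x) for all i} and T = {(x, y) ∈ X × ℤ : 0 ≤ y ≤ M and y ≤ M·μ_i(x) for all i}. Then (x, z) is a nondominated solution of the biobjective maximization problem of ((x,z) ↦ c·x, (x,z) ↦ z) over S if and only if M·z ∈ ℤ and (x, M·z) is a nondominated solution of the biobjective maximization problem of ((x,y) ↦ c·x, (x,y) ↦ y) over T; moreover the map (x, z) ↦ (x, M·z) is a bijection between the two sets of nondominated solutions. -/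
theorem nondominated_congr {σ ι : Type*} {S : Set σ} {f f' : ι → σ → ℝ}
    (h : ∀ i s t, f i s ≤ f i t ↔ f' i s ≤ f' i t) (s : σ) :
    Nondominated S f s ↔ Nondominated S f' s := by
  simp only [Nondominated, h, ← not_le]

theorem IsGreatest.preimage_of_strictMono {α β : Type*} [LinearOrder α] [Preorder β]
    {e : α → β} (he : StrictMono e) {F : Set β} {k : α} (h : IsGreatest F (e k)) :
    IsGreatest (e ⁻¹' F) k :=
  ⟨h.1, fun _ hy => he.le_iff_le.mp (h.2 hy)⟩

theorem nondominated_fiber_iff {α β : Type*} [PartialOrder β] {X : Set α} {F : α → Set β}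
    {u : α → β} (hu : ∀ x ∈ X, IsGreatest (F x) (u x)) (f : α → ℝ) {g : β → ℝ}
    (hg : StrictMono g) (x : α) (z : β) :
    Nondominated {p | p.1 ∈ X ∧ p.2 ∈ F p.1} ![fun q => f q.1, fun q => g q.2] (x, z) ↔
      Nondominated X ![f, fun x => g (u x)] x ∧ z = u x := by
  simp only [nondominated_pair_iff, Set.mem_ofPred_eq, Prod.exists]
  constructor
  · rintro ⟨⟨hx, hz⟩, hnd⟩
    have hzu : z = u x := ((hu x hx).2 hz).eq_of_not_lt fun hlt =>
      hnd ⟨x, u x, ⟨hx, (hu x hx).1⟩, le_rfl, (hg hlt).le, Or.inr (hg hlt)⟩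
    subst hzu
    refine ⟨⟨hx, ?_⟩, rfl⟩
    rintro ⟨x', hx', hf, hgu, hlt⟩
    exact hnd ⟨x', u x', ⟨hx', (hu x' hx').1⟩, hf, hgu, hlt⟩
  · rintro ⟨⟨hx, hnd⟩, rfl⟩
    refine ⟨⟨hx, (hu x hx).1⟩, ?_⟩
    rintro ⟨x', z', ⟨hx', hz'⟩, hf, hgz, hlt⟩
    have hz'u : g z' ≤ g (u x') := hg.monotone ((hu x' hx').2 hz')
    exact hnd ⟨x', hx', hf, hgz.trans hz'u, hlt.imp_right (·.trans_le hz'u)⟩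

theorem exists_int_div_isGreatest_of_bounds {ι : Type*} [Fintype ι] {r : ι → ℝ}
    (hr : ∀ i, 0 ≤ r i) {M : ℤ} (hM : M ≠ 0) (hrM : ∀ i, ∃ k : ℤ, r i = k / M) :
    ∃ k : ℤ, IsGreatest {z : ℝ | 0 ≤ z ∧ z ≤ 1 ∧ ∀ i, z ≤ r i} (k / M) := by
  classical
  set B := insert 1 (Finset.univ.image r)
  have hB : B.Nonempty := Finset.insert_nonempty _ _
  have hk : ∃ k : ℤ, B.min' hB = k / M := by
    rcases Finset.mem_insert.mp (B.min'_mem hB) with h | h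
    · exact ⟨M, by rw [h, div_self (by exact_mod_cast hM)]⟩
    · obtain ⟨i, -, hi⟩ := Finset.mem_image.mp h
      rw [← hi]; exact hrM i
  obtain ⟨k, hk⟩ := hk
  refine ⟨k, hk ▸ ⟨⟨?_, B.min'_le _ (by simp [B]), fun i => B.min'_le _ (by simp [B])⟩, ?_⟩⟩
  · refine B.le_min' hB _ fun y hy => ?_
    rcases Finset.mem_insert.mp hy with rfl | hy
    · exact zero_le_one
    · obtain ⟨i, -, rfl⟩ := Finset.mem_image.mp hy; exact hr i
  · rintro z ⟨-, hz1, hzr⟩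
    refine B.le_min' hB _ fun y hy => ?_
    rcases Finset.mem_insert.mp hy with rfl | hy
    · exact hz1
    · obtain ⟨i, -, rfl⟩ := Finset.mem_image.mp hy; exact hzr i

theorem Set.bijOn_mul_of_iff_exists_int {α : Type*} {P : Set (α × ℝ)} {Q : Set (α × ℤ)}
    {M : ℝ} (hM : M ≠ 0) (h : ∀ x z, (x, z) ∈ P ↔ ∃ y : ℤ, (y : ℝ) = M * z ∧ (x, y) ∈ Q) :
    Set.BijOn (fun p : α × ℝ => (p.1, M * p.2)) P ((fun q : α × ℤ => (q.1, (q.2 : ℝ))) '' Q) := by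
  refine ⟨fun ⟨x, z⟩ hp => ?_, fun ⟨x, z⟩ _ ⟨x', z'⟩ _ he => ?_,
    fun ⟨x, w⟩ ⟨⟨x', y⟩, hq, he⟩ => ?_⟩
  · obtain ⟨y, hy, hq⟩ := (h x z).mp hp
    exact ⟨(x, y), hq, by simp [hy]⟩
  · simp only [Prod.mk.injEq, mul_right_inj' hM] at he
    rw [he.1, he.2]
  · simp only [Prod.mk.injEq] at he
    obtain ⟨rfl, rfl⟩ := he
    refine ⟨(x', y / M), (h _ _).mpr ⟨y, ?_, hq⟩, ?_⟩ <;> simp [mul_div_cancel₀ _ hM]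

theorem nondominated_fiber_iff_exists_int {α : Type*} {X : Set α} {FS : α → Set ℝ}
    {FT : α → Set ℤ} {M : ℝ} (hM : 0 < M) {k : α → ℤ}
    (hk : ∀ x ∈ X, IsGreatest (FS x) (k x / M))
    (hFT : ∀ x, FT x = (fun y : ℤ => (y : ℝ) / M) ⁻¹' FS x) (f : α → ℝ) (x : α) (z : ℝ) :
    Nondominated {p | p.1 ∈ X ∧ p.2 ∈ FS p.1} ![fun q => f q.1, fun q => q.2] (x, z) ↔
      ∃ y : ℤ, (y : ℝ) = M * z ∧
        Nondominated {p | p.1 ∈ X ∧ p.2 ∈ FT p.1} ![fun q => f q.1, fun q => (q.2 : ℝ)] (x, y) := by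
  have hkT : ∀ x ∈ X, IsGreatest (FT x) (k x) := fun x hx =>
    hFT x ▸ (hk x hx).preimage_of_strictMono fun _ _ h =>
      div_lt_div_of_pos_right (Int.cast_lt.mpr h) hM
  have hscale : Nondominated X ![f, fun x => (k x : ℝ) / M] x ↔
      Nondominated X ![f, fun x => (k x : ℝ)] x :=
    nondominated_congr (fun i s t => by fin_cases i <;> simp [div_le_div_iff_of_pos_right hM]) x
  refine (nondominated_fiber_iff hk f strictMono_id x z).trans ?_
  simp only [id, hscale, nondominated_fiber_iff hkT f Int.cast_strictMono x]
  constructor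
  · rintro ⟨hnd, rfl⟩
    exact ⟨k x, by field_simp, hnd, rfl⟩
  · rintro ⟨y, hy, hnd, rfl⟩
    exact ⟨hnd, by field_simp; linarith⟩

theorem stmt3_general (n m : ℕ)
    (X : Set (Fin n → ℤ))
    (c : Fin n → ℤ)
    (a : Fin m → Fin n → ℤ) (b : Fin m → ℤ) (d : Fin m → ℤ) (hd : ∀ i, 0 < d i)
    (μ : Fin m → (Fin n → ℤ) → ℝ)
    (hμdef : ∀ i x, μ i x = ((b i : ℝ) - ∑ j, (a i j : ℝ) * (x j : ℝ)) / (d i : ℝ))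
    (hμ01 : ∀ x ∈ X, ∀ i, 0 ≤ μ i x ∧ μ i x ≤ 1)
    (M : ℤ) (hM : 0 < M) (hdiv : ∀ i, d i ∣ M)
    (S : Set ((Fin n → ℤ) × ℝ))
    (hS : S = {p | p.1 ∈ X ∧ 0 ≤ p.2 ∧ p.2 ≤ 1 ∧ ∀ i, p.2 ≤ μ i p.1})
    (T : Set ((Fin n → ℤ) × ℤ))
    (hT : T = {p | p.1 ∈ X ∧ 0 ≤ p.2 ∧ p.2 ≤ M ∧ ∀ i, (p.2 : ℝ) ≤ (M : ℝ) * μ i p.1}) :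
    (∀ x : Fin n → ℤ, ∀ z : ℝ,
      (Nondominated S ![fun q => ∑ j, (c j : ℝ) * q.1 j, fun q => q.2] (x, z) ↔
        ∃ y : ℤ, (y : ℝ) = (M : ℝ) * z ∧
          Nondominated T ![fun q => ∑ j, (c j : ℝ) * q.1 j, fun q => (q.2 : ℝ)] (x, y))) ∧
    Set.BijOn (fun p : (Fin n → ℤ) × ℝ => (p.1, (M : ℝ) * p.2))
      {p | Nondominated S ![fun q => ∑ j, (c j : ℝ) * q.1 j, fun q => q.2] p}
      ((fun q : (Fin n → ℤ) × ℤ => (q.1, (q.2 : ℝ))) ''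
        {q | Nondominated T ![fun q => ∑ j, (c j : ℝ) * q.1 j, fun q => (q.2 : ℝ)] q}) := by
  have hMR : (0 : ℝ) < M := by exact_mod_cast hM
  have hμM : ∀ x i, ∃ k : ℤ, μ i x = k / M := fun x i => by
    obtain ⟨q, hq⟩ := hdiv i
    have hdR : (d i : ℝ) ≠ 0 := by exact_mod_cast (hd i).ne'
    have hqR : (q : ℝ) ≠ 0 := by exact_mod_cast right_ne_zero_of_mul (hq ▸ hM.ne')
    refine ⟨q * (b i - ∑ j, a i j * x j), ?_⟩
    rw [hμdef, hq]; push_cast; field_simp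
  choose! k hk using fun x (hx : x ∈ X) =>
    exists_int_div_isGreatest_of_bounds (fun i => (hμ01 x hx i).1) hM.ne' (hμM x)
  have hpre : ∀ x, {y : ℤ | 0 ≤ y ∧ y ≤ M ∧ ∀ i, (y : ℝ) ≤ M * μ i x} =
      (fun y : ℤ => (y : ℝ) / M) ⁻¹' {z | 0 ≤ z ∧ z ≤ 1 ∧ ∀ i, z ≤ μ i x} := fun x => by
    ext y
    simp only [Set.mem_preimage, Set.mem_ofPred_eq, le_div_iff₀ hMR, div_le_iff₀ hMR, zero_mul,
      one_mul, Int.cast_nonneg_iff, Int.cast_le, mul_comm (μ _ x)]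
  have key := nondominated_fiber_iff_exists_int hMR hk hpre fun x => ∑ j, (c j : ℝ) * x j
  subst hS hT
  exact ⟨key, Set.bijOn_mul_of_iff_exists_int hMR.ne' key⟩

theorem stmt3 (n m : ℕ) (hn : 1 ≤ n) (hm : 1 ≤ m)
    (X : Set (Fin n → ℤ)) (hXfin : X.Finite) (hXne : X.Nonempty)
    (c : Fin n → ℤ)
    (a : Fin m → Fin n → ℤ) (b : Fin m → ℤ) (d : Fin m → ℤ) (hd : ∀ i, 0 < d i)
    (μ : Fin m → (Fin n → ℤ) → ℝ)
    (hμdef : ∀ i x, μ i x = ((b i : ℝ) - ∑ j, (a i j : ℝ) * (x j : ℝ)) / (d i : ℝ))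
    (hμ01 : ∀ x ∈ X, ∀ i, 0 ≤ μ i x ∧ μ i x ≤ 1)
    (M : ℤ) (hM : 0 < M) (hdiv : ∀ i, d i ∣ M)
    (S : Set ((Fin n → ℤ) × ℝ))
    (hS : S = {p | p.1 ∈ X ∧ 0 ≤ p.2 ∧ p.2 ≤ 1 ∧ ∀ i, p.2 ≤ μ i p.1})
    (T : Set ((Fin n → ℤ) × ℤ))
    (hT : T = {p | p.1 ∈ X ∧ 0 ≤ p.2 ∧ p.2 ≤ M ∧ ∀ i, (p.2 : ℝ) ≤ (M : ℝ) * μ i p.1}) :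
    (∀ x : Fin n → ℤ, ∀ z : ℝ,
      (Nondominated S ![fun q => ∑ j, (c j : ℝ) * q.1 j, fun q => q.2] (x, z) ↔
        ∃ y : ℤ, (y : ℝ) = (M : ℝ) * z ∧
          Nondominated T ![fun q => ∑ j, (c j : ℝ) * q.1 j, fun q => (q.2 : ℝ)] (x, y))) ∧
    Set.BijOn (fun p : (Fin n → ℤ) × ℝ => (p.1, (M : ℝ) * p.2))
      {p | Nondominated S ![fun q => ∑ j, (c j : ℝ) * q.1 j, fun q => q.2] p}
      ((fun q : (Fin n → ℤ) × ℤ => (q.1, (q.2 : ℝ))) ''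
        {q | Nondominated T ![fun q => ∑ j, (c j : ℝ) * q.1 j, fun q => (q.2 : ℝ)] q}) :=
  stmt3_general n m X c a b d hd μ hμdef hμ01 M hM hdiv S hS T hT
end

section
/- Let n ≥ 1, k ≥ 1, let X ⊆ ℝ^n be a set, let 0 = α_0 < α_1 < ⋯ < α_k = 1 be a partition of [0,1], and for each i = 1, …, n let c_{i1}, c_{i2} : [0,1] → ℝ be functions that are affine on each subinterval [α_{j−1}, α_j]. For x ∈ X and α ∈ [0,1] define L_α(x) = Σ_{i=1}^n c_{i1}(α) x_i and U_α(x) = Σ_{i=1}^n c_{i2}(α) x_i. Say that y ∈ X dominates x ∈ X in the fuzzy ordering if L_α(x) ≤ L_α(y) and U_α(x) ≤ U_α(y) for every α ∈ [0,1], with L_α(x) < L_α(y) or U_α(x) < U_α(y) for at least one α ∈ [0,1]. Then x ∈ X is not dominated by any y ∈ X in the fuzzy ordering if and only if x is a nondominated solution of the 2(k+1)-objective maximization problem of (L_{α_0}, U_{α_0}, L_{α_1}, U_{α_1}, …, L_{α_k}, U_{α_k}) over X. -/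
open Set

theorem Fin.exists_mem_Icc_castSucc_succ {γ : Type*} [LinearOrder γ] :
    ∀ {k : ℕ}, 0 < k → ∀ (a : Fin (k + 1) → γ) {x : γ}, x ∈ Icc (a 0) (a (Fin.last k)) →
      ∃ j : Fin k, x ∈ Icc (a j.castSucc) (a j.succ)
  | 1, _, _, _, hx => ⟨0, hx⟩
  | k + 2, _, a, x, hx => by
    by_cases hxk : x ≤ a (Fin.last (k + 1)).castSucc
    · obtain ⟨j, hj⟩ := exists_mem_Icc_castSucc_succ k.succ_pos (a ∘ Fin.castSucc) ⟨hx.1, hxk⟩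
      exact ⟨j.castSucc, hj⟩
    · exact ⟨Fin.last (k + 1), (not_le.mp hxk).le, hx.2⟩

def IsAffineOn (g : ℝ → ℝ) (I : Set ℝ) : Prop :=
  ∃ s t : ℝ, ∀ β ∈ I, g β = s * β + t

namespace IsAffineOn

variable {f g : ℝ → ℝ} {I : Set ℝ}

theorem sub (hf : IsAffineOn f I) (hg : IsAffineOn g I) : IsAffineOn (fun β => f β - g β) I := by
  obtain ⟨s, t, hst⟩ := hf
  obtain ⟨s', t', hst'⟩ := hg
  exact ⟨s - s', t - t', fun β hβ => by simp only [hst β hβ, hst' β hβ]; ring⟩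

theorem sum_mul {ι : Type*} [Fintype ι] {c : ι → ℝ → ℝ} (hc : ∀ i, IsAffineOn (c i) I)
    (w : ι → ℝ) : IsAffineOn (fun β => ∑ i, c i β * w i) I := by
  choose s t hst using hc
  refine ⟨∑ i, s i * w i, ∑ i, t i * w i, fun β hβ => ?_⟩
  simp only [hst _ β hβ, Finset.sum_mul, ← Finset.sum_add_distrib]
  exact Finset.sum_congr rfl fun i _ => by ring

theorem mem_Icc_min_max {a b : ℝ} (hg : IsAffineOn g (Icc a b)) {β : ℝ} (hβ : β ∈ Icc a b) :
    g β ∈ Icc (min (g a) (g b)) (max (g a) (g b)) := by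
  obtain ⟨s, t, hst⟩ := hg
  have hab : a ≤ b := hβ.1.trans hβ.2
  rw [hst β hβ, hst a ⟨le_rfl, hab⟩, hst b ⟨hab, le_rfl⟩]
  rcases le_total 0 s with hs | hs
  · rw [min_eq_left (by nlinarith), max_eq_right (by nlinarith)]
    constructor <;> nlinarith [hβ.1, hβ.2]
  · rw [min_eq_right (by nlinarith), max_eq_left (by nlinarith)]
    constructor <;> nlinarith [hβ.1, hβ.2]

end IsAffineOn

def IsPiecewiseAffine {k : ℕ} (α : Fin (k + 1) → ℝ) (g : ℝ → ℝ) : Prop :=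
  ∀ j : Fin k, IsAffineOn g (Icc (α j.castSucc) (α j.succ))

namespace IsPiecewiseAffine

variable {k : ℕ} {α : Fin (k + 1) → ℝ} {f g : ℝ → ℝ}

theorem sub (hf : IsPiecewiseAffine α f) (hg : IsPiecewiseAffine α g) :
    IsPiecewiseAffine α (fun β => f β - g β) :=
  fun j => (hf j).sub (hg j)

theorem sum_mul {ι : Type*} [Fintype ι] {c : ι → ℝ → ℝ} (hc : ∀ i, IsPiecewiseAffine α (c i))
    (w : ι → ℝ) : IsPiecewiseAffine α (fun β => ∑ i, c i β * w i) :=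
  fun j => IsAffineOn.sum_mul (fun i => hc i j) w

theorem nonneg_iff (hg : IsPiecewiseAffine α g) (hk : 0 < k) (hα : Monotone α) :
    (∀ β ∈ Icc (α 0) (α (Fin.last k)), 0 ≤ g β) ↔ ∀ j, 0 ≤ g (α j) := by
  refine ⟨fun h j => h _ ⟨hα (Fin.zero_le j), hα (Fin.le_last j)⟩, fun h β hβ => ?_⟩
  obtain ⟨j, hj⟩ := Fin.exists_mem_Icc_castSucc_succ hk α hβ
  exact (le_min (h _) (h _)).trans ((hg j).mem_Icc_min_max hj).1

theorem exists_pos_iff (hg : IsPiecewiseAffine α g) (hk : 0 < k) (hα : Monotone α) :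
    (∃ β ∈ Icc (α 0) (α (Fin.last k)), 0 < g β) ↔ ∃ j, 0 < g (α j) := by
  refine ⟨fun ⟨β, hβ, hpos⟩ => ?_,
    fun ⟨j, hj⟩ => ⟨α j, ⟨hα (Fin.zero_le j), hα (Fin.le_last j)⟩, hj⟩⟩
  obtain ⟨j, hj⟩ := Fin.exists_mem_Icc_castSucc_succ hk α hβ
  rcases lt_max_iff.mp (hpos.trans_le ((hg j).mem_Icc_min_max hj).2) with h | h
  exacts [⟨_, h⟩, ⟨_, h⟩]

end IsPiecewiseAffine

theorem stmt11_general (n k : ℕ) (hk : 1 ≤ k)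
    (X : Set (Fin n → ℝ))
    (α : Fin (k + 1) → ℝ) (hα0 : α 0 = 0) (hαk : α (Fin.last k) = 1)
    (hmono : StrictMono α)
    (c1 c2 : Fin n → ℝ → ℝ)
    (haff1 : ∀ i, ∀ j : Fin k, ∃ s t : ℝ,
      ∀ β ∈ Set.Icc (α j.castSucc) (α j.succ), c1 i β = s * β + t)
    (haff2 : ∀ i, ∀ j : Fin k, ∃ s t : ℝ,
      ∀ β ∈ Set.Icc (α j.castSucc) (α j.succ), c2 i β = s * β + t)
    (L U : ℝ → (Fin n → ℝ) → ℝ)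
    (hL : ∀ β x, L β x = ∑ i, c1 i β * x i)
    (hU : ∀ β x, U β x = ∑ i, c2 i β * x i)
    (x : Fin n → ℝ) (hx : x ∈ X) :
    (¬ ∃ y ∈ X,
        (∀ β ∈ Set.Icc (0 : ℝ) 1, L β x ≤ L β y ∧ U β x ≤ U β y) ∧
        (∃ β ∈ Set.Icc (0 : ℝ) 1, L β x < L β y ∨ U β x < U β y)) ↔
      Nondominated X
        (fun jb : Fin (k + 1) × Bool => fun z =>
          if jb.2 then U (α jb.1) z else L (α jb.1) z) x := by
  have hgap : ∀ (c : Fin n → ℝ → ℝ) (F : ℝ → (Fin n → ℝ) → ℝ),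
      (∀ β z, F β z = ∑ i, c i β * z i) → (∀ i, IsPiecewiseAffine α (c i)) →
      ∀ y, IsPiecewiseAffine α (fun β => F β y - F β x) := by
    intro c F hF hc y
    simp only [hF]
    exact (IsPiecewiseAffine.sum_mul hc y).sub (IsPiecewiseAffine.sum_mul hc x)
  simp only [Nondominated, hx, true_and]
  refine not_congr (exists_congr fun y => and_congr_right fun _ => ?_)
  have hLnn := (hgap c1 L hL haff1 y).nonneg_iff hk hmono.monotone
  have hUnn := (hgap c2 U hU haff2 y).nonneg_iff hk hmono.monotone
  have hLpos := (hgap c1 L hL haff1 y).exists_pos_iff hk hmono.monotone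
  have hUpos := (hgap c2 U hU haff2 y).exists_pos_iff hk hmono.monotone
  simp only [sub_nonneg, sub_pos] at hLnn hUnn hLpos hUpos
  simp only [← hα0, ← hαk, Prod.forall, Prod.exists, Bool.forall_bool, Bool.exists_bool,
    Bool.false_eq_true, if_false, if_true, forall_and, and_or_left, exists_or,
    hLnn, hUnn, hLpos, hUpos]

theorem stmt11 (n k : ℕ) (hn : 1 ≤ n) (hk : 1 ≤ k)
    (X : Set (Fin n → ℝ))
    (α : Fin (k + 1) → ℝ) (hα0 : α 0 = 0) (hαk : α (Fin.last k) = 1)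
    (hmono : StrictMono α)
    (c1 c2 : Fin n → ℝ → ℝ)
    (haff1 : ∀ i, ∀ j : Fin k, ∃ s t : ℝ,
      ∀ β ∈ Set.Icc (α j.castSucc) (α j.succ), c1 i β = s * β + t)
    (haff2 : ∀ i, ∀ j : Fin k, ∃ s t : ℝ,
      ∀ β ∈ Set.Icc (α j.castSucc) (α j.succ), c2 i β = s * β + t)
    (L U : ℝ → (Fin n → ℝ) → ℝ)
    (hL : ∀ β x, L β x = ∑ i, c1 i β * x i)
    (hU : ∀ β x, U β x = ∑ i, c2 i β * x i)
    (x : Fin n → ℝ) (hx : x ∈ X) :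
    (¬ ∃ y ∈ X,
        (∀ β ∈ Set.Icc (0 : ℝ) 1, L β x ≤ L β y ∧ U β x ≤ U β y) ∧
        (∃ β ∈ Set.Icc (0 : ℝ) 1, L β x < L β y ∨ U β x < U β y)) ↔
      Nondominated X
        (fun jb : Fin (k + 1) × Bool => fun z =>
          if jb.2 then U (α jb.1) z else L (α jb.1) z) x :=
  stmt11_general n k hk X α hα0 hαk hmono c1 c2 haff1 haff2 L U hL hU x hx
end
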